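/- arXiv:1703.07962 — 2 statements merged into one kernel-verified Lean document; each statement's English description precedes it below -/
import Mathlib

section
/- Let Ω ⊆ ℝ² be an open set, let ψ : Ω → ℝ² be continuously differentiable on Ω, and let v : ℝ² → ℝ be smooth (C^∞) with compact support contained in Ω. Then ∫_Ω symCurl ψ(x) : ∇²v(x) dx = 0, where ∇²v is the Hessian of v. -/
noncomputable section

open MeasureTheory Matrix

/-- The plane `ℝ²` as a Euclidean space. -/
abbrev E2 := EuclideanSpace ℝ (Fin 2)

/-- Partial derivative `∂ᵢ f` of a scalar field. -/
def pd (i : Fin 2) (f : E2 → ℝ) (x : E2) : ℝ :=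
  fderiv ℝ f x (EuclideanSpace.single i 1)

/-- `Curl ψ`: the 2×2 matrix field with rows `(∂₂ψᵢ, −∂₁ψᵢ)`. -/
def CurlM (ψ : E2 → Fin 2 → ℝ) (x : E2) : Matrix (Fin 2) (Fin 2) ℝ :=
  Matrix.of fun i => ![pd 1 (fun y => ψ y i) x, -pd 0 (fun y => ψ y i) x]

/-- `symCurl ψ = ½(Curl ψ + (Curl ψ)ᵀ)`. -/
def symCurlM (ψ : E2 → Fin 2 → ℝ) (x : E2) : Matrix (Fin 2) (Fin 2) ℝ :=
  (2⁻¹ : ℝ) • (CurlM ψ x + (CurlM ψ x)ᵀ)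

/-- Row-wise divergence of a matrix field: `(Div N)ᵢ = ∂₁N_{i1} + ∂₂N_{i2}`. -/
def DivM (N : E2 → Matrix (Fin 2) (Fin 2) ℝ) (x : E2) : Fin 2 → ℝ :=
  fun i => pd 0 (fun y => N y i 0) x + pd 1 (fun y => N y i 1) x

/-- Divergence of a vector field: `div w = ∂₁w₁ + ∂₂w₂`. -/
def divV (w : E2 → Fin 2 → ℝ) (x : E2) : ℝ :=
  pd 0 (fun y => w y 0) x + pd 1 (fun y => w y 1) x

/-- `divDiv N = div (Div N)`. -/
def divDivM (N : E2 → Matrix (Fin 2) (Fin 2) ℝ) (x : E2) : ℝ :=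
  divV (fun y => DivM N y) x

/-- Hessian matrix `(∇²v)_{ij} = ∂ᵢ∂ⱼ v`. -/
def hessM (v : E2 → ℝ) (x : E2) : Matrix (Fin 2) (Fin 2) ℝ :=
  Matrix.of fun i j => pd i (fun y => pd j v y) x

/-- The Frobenius inner product `A : B = Σ_{ij} A_{ij} B_{ij}`. -/
def frob (A B : Matrix (Fin 2) (Fin 2) ℝ) : ℝ :=
  ∑ i : Fin 2, ∑ j : Fin 2, A i j * B i j

/-!
Since the Hessian of `v` is symmetric, `symCurl ψ : ∇²v = Curl ψ : ∇²v`, whose `i`-th row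
contributes `∂₂ψᵢ ∂ᵢ∂₁v − ∂₁ψᵢ ∂ᵢ∂₂v`. Integrating by parts moves the derivatives of `ψᵢ` onto
`∂ᵢ∂ⱼv`, which is smooth with compact support inside `Ω`, so only the values of `ψ` on `Ω` enter.
The two resulting terms `ψᵢ ∂₂∂ᵢ∂₁v` and `ψᵢ ∂₁∂ᵢ∂₂v` cancel by the symmetry of third derivatives.
-/

section Support

variable {X M : Type*} [TopologicalSpace X] [MulZeroClass M] [TopologicalSpace M] [ContinuousMul M]

theorem ContinuousOn.continuous_mul_of_tsupport_subset {f g : X → M} {s : Set X} (hs : IsOpen s)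
    (hf : ContinuousOn f s) (hg : Continuous g) (hgs : tsupport g ⊆ s) :
    Continuous fun x => f x * g x :=
  continuous_of_tsupport fun _ hx =>
    (hf.continuousAt (hs.mem_nhds (hgs (tsupport_mul_subset_right hx)))).mul hg.continuousAt

theorem ContinuousOn.integrable_mul_of_tsupport_subset {R : Type*} [MeasurableSpace X]
    [OpensMeasurableSpace X] {μ : Measure X} [IsFiniteMeasureOnCompacts μ] [NormedRing R]
    {f g : X → R} {s : Set X} (hs : IsOpen s) (hf : ContinuousOn f s) (hg : Continuous g)
    (hgc : HasCompactSupport g) (hgs : tsupport g ⊆ s) :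
    Integrable (fun x => f x * g x) μ :=
  (hf.continuous_mul_of_tsupport_subset hs hg hgs).integrable_of_hasCompactSupport hgc.mul_left

end Support

section PartialDerivatives

variable {f g : E2 → ℝ} {x : E2}

theorem tsupport_pd_subset (k : Fin 2) (f : E2 → ℝ) : tsupport (pd k f) ⊆ tsupport f :=
  tsupport_fderiv_apply_subset ℝ _

theorem tsupport_pd_pd_subset (i j : Fin 2) (f : E2 → ℝ) : tsupport (pd i (pd j f)) ⊆ tsupport f :=
  (tsupport_pd_subset i _).trans (tsupport_pd_subset j f)

theorem HasCompactSupport.pd (hf : HasCompactSupport f) (k : Fin 2) : HasCompactSupport (pd k f) :=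
  hf.fderiv_apply ℝ _

theorem ContDiff.pd {m n : WithTop ℕ∞} (hf : ContDiff ℝ n f) (hmn : m + 1 ≤ n) (k : Fin 2) :
    ContDiff ℝ m (pd k f) :=
  (hf.fderiv_right hmn).clm_apply contDiff_const

theorem ContDiffOn.continuousOn_pd {s : Set E2} (hf : ContDiffOn ℝ 1 f s) (hs : IsOpen s)
    (k : Fin 2) : ContinuousOn (pd k f) s :=
  (hf.continuousOn_fderiv_of_isOpen hs le_rfl).clm_apply continuousOn_const

theorem pd_pd_eq_fderiv_fderiv (hf : DifferentiableAt ℝ (fderiv ℝ f) x) (a b : Fin 2) :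
    pd a (pd b f) x =
      fderiv ℝ (fderiv ℝ f) x (EuclideanSpace.single a 1) (EuclideanSpace.single b 1) := by
  change fderiv ℝ (fun y => fderiv ℝ f y (EuclideanSpace.single b 1)) x _ = _
  simp [fderiv_clm_apply hf (differentiableAt_const _)]

theorem pd_comm (hf : ContDiffAt ℝ 2 f x) (a b : Fin 2) : pd a (pd b f) x = pd b (pd a f) x := by
  have hdf : DifferentiableAt ℝ (fderiv ℝ f) x :=
    (hf.fderiv_right (m := 1) le_rfl).differentiableAt one_ne_zero
  rw [pd_pd_eq_fderiv_fderiv hdf, pd_pd_eq_fderiv_fderiv hdf]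
  exact hf.isSymmSndFDerivAt (by simp) _ _

theorem pd_pd_pd_comm (hf : ContDiff ℝ 3 f) (a i b : Fin 2) :
    pd a (pd i (pd b f)) x = pd b (pd i (pd a f)) x := by
  have hf2 : ContDiff ℝ 2 f := hf.of_le (by norm_num)
  calc pd a (pd i (pd b f)) x = pd i (pd a (pd b f)) x := pd_comm (hf.pd le_rfl b).contDiffAt a i
    _ = pd i (pd b (pd a f)) x := by rw [funext fun y => pd_comm hf2.contDiffAt a b (x := y)]
    _ = pd b (pd i (pd a f)) x := (pd_comm (hf.pd le_rfl a).contDiffAt b i).symm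

theorem integrable_pd_mul {Ω : Set E2} (hΩ : IsOpen Ω) (hf : ContDiffOn ℝ 1 f Ω) (hg : Continuous g)
    (hgc : HasCompactSupport g) (hgΩ : tsupport g ⊆ Ω) (k : Fin 2) :
    Integrable fun x => pd k f x * g x :=
  (hf.continuousOn_pd hΩ k).integrable_mul_of_tsupport_subset hΩ hg hgc hgΩ

theorem integral_pd_mul_eq_neg_mul_pd {Ω : Set E2} (hΩ : IsOpen Ω) (hf : ContDiffOn ℝ 1 f Ω)
    (hg : ContDiff ℝ 1 g) (hgc : HasCompactSupport g) (hgΩ : tsupport g ⊆ Ω) (k : Fin 2) :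
    ∫ x, pd k f x * g x = -∫ x, f x * pd k g x := by
  have hgk : Continuous (pd k g) := (hg.pd (m := 0) le_rfl k).continuous
  refine neg_eq_iff_eq_neg.mp (Eq.symm <| integral_mul_fderiv_eq_neg_fderiv_mul_of_integrable
    (integrable_pd_mul hΩ hf hg.continuous hgc hgΩ k)
    (hf.continuousOn.integrable_mul_of_tsupport_subset hΩ hgk (hgc.pd k)
      ((tsupport_pd_subset k g).trans hgΩ))
    (hf.continuousOn.integrable_mul_of_tsupport_subset hΩ hg.continuous hgc hgΩ)
    (fun x hx => (hf.differentiableOn one_ne_zero x (hgΩ hx)).differentiableAt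
      (hΩ.mem_nhds (hgΩ hx)))
    (fun x _ => hg.differentiable one_ne_zero x))

theorem integrable_pd_mul_pd_pd {Ω : Set E2} (hΩ : IsOpen Ω) (hf : ContDiffOn ℝ 1 f Ω)
    (hg : ContDiff ℝ 2 g) (hgc : HasCompactSupport g) (hgΩ : tsupport g ⊆ Ω) (k i j : Fin 2) :
    Integrable fun x => pd k f x * pd i (pd j g) x :=
  integrable_pd_mul hΩ hf ((hg.pd le_rfl j).pd (m := 0) le_rfl i).continuous ((hgc.pd j).pd i)
    ((tsupport_pd_pd_subset i j g).trans hgΩ) k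

end PartialDerivatives

theorem frob_half_add_transpose_of_isSymm (A : Matrix (Fin 2) (Fin 2) ℝ)
    {B : Matrix (Fin 2) (Fin 2) ℝ} (hB : B.IsSymm) :
    frob ((2⁻¹ : ℝ) • (A + Aᵀ)) B = frob A B := by
  have hB10 : B 1 0 = B 0 1 := hB.apply 0 1
  simp only [frob, Fin.sum_univ_two, Matrix.smul_apply, Matrix.add_apply, transpose_apply,
    smul_eq_mul, hB10]
  ring

theorem isSymm_hessM {v : E2 → ℝ} {x : E2} (hv : ContDiffAt ℝ 2 v x) : (hessM v x).IsSymm :=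
  IsSymm.ext fun i j => pd_comm hv j i

theorem frob_symCurlM_hessM (ψ : E2 → Fin 2 → ℝ) {v : E2 → ℝ} {x : E2} (hv : ContDiffAt ℝ 2 v x) :
    frob (symCurlM ψ x) (hessM v x) =
      ∑ i, (pd 1 (fun y => ψ y i) x * pd i (pd 0 v) x
        - pd 0 (fun y => ψ y i) x * pd i (pd 1 v) x) := by
  rw [symCurlM, frob_half_add_transpose_of_isSymm _ (isSymm_hessM hv)]
  simp only [frob, CurlM, hessM, Fin.sum_univ_two, of_apply, cons_val_zero, cons_val_one]
  ring

theorem integral_pd_mul_sub_pd_mul_eq_zero {Ω : Set E2} (hΩ : IsOpen Ω) {f : E2 → ℝ}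
    (hf : ContDiffOn ℝ 1 f Ω) {v : E2 → ℝ} (hv : ContDiff ℝ 3 v) (hvc : HasCompactSupport v)
    (hvΩ : tsupport v ⊆ Ω) (i : Fin 2) :
    ∫ x, (pd 1 f x * pd i (pd 0 v) x - pd 0 f x * pd i (pd 1 v) x) = 0 := by
  have hsmooth (j : Fin 2) : ContDiff ℝ 1 (pd i (pd j v)) := (hv.pd (by norm_num) j).pd le_rfl i
  have hcpt (j : Fin 2) : HasCompactSupport (pd i (pd j v)) := (hvc.pd j).pd i
  have hsupp (j : Fin 2) : tsupport (pd i (pd j v)) ⊆ Ω := (tsupport_pd_pd_subset i j v).trans hvΩ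
  have hv2 : ContDiff ℝ 2 v := hv.of_le (by norm_num)
  rw [integral_sub (integrable_pd_mul_pd_pd hΩ hf hv2 hvc hvΩ 1 i 0)
      (integrable_pd_mul_pd_pd hΩ hf hv2 hvc hvΩ 0 i 1),
    integral_pd_mul_eq_neg_mul_pd hΩ hf (hsmooth 0) (hcpt 0) (hsupp 0),
    integral_pd_mul_eq_neg_mul_pd hΩ hf (hsmooth 1) (hcpt 1) (hsupp 1)]
  simp only [pd_pd_pd_comm hv 1 i 0, sub_self]

/-- For a `C¹` vector field `ψ` on an open set `Ω ⊆ ℝ²` and a smooth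
compactly supported test function `v` with support in `Ω`,
`∫_Ω symCurl ψ : ∇²v dx = 0`. -/
theorem integral_symCurl_frob_hess_eq_zero (Ω : Set E2) (hΩ : IsOpen Ω)
    (ψ : E2 → Fin 2 → ℝ) (hψ : ContDiffOn ℝ 1 ψ Ω)
    (v : E2 → ℝ) (hv : ContDiff ℝ (⊤ : ℕ∞) v)
    (hvsupp : HasCompactSupport v) (hvsub : tsupport v ⊆ Ω) :
    ∫ x in Ω, frob (symCurlM ψ x) (hessM v x) = 0 := by
  have hv3 : ContDiff ℝ 3 v := hv.of_le (WithTop.coe_le_coe.mpr le_top)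
  have hv2 : ContDiff ℝ 2 v := hv3.of_le (by norm_num)
  have hψ_row (i : Fin 2) : ContDiffOn ℝ 1 (fun y => ψ y i) Ω := contDiffOn_pi.1 hψ i
  have hhess_out (i j : Fin 2) (x : E2) (hx : x ∉ Ω) : pd i (pd j v) x = 0 :=
    image_eq_zero_of_notMem_tsupport fun h => hx (hvsub (tsupport_pd_pd_subset i j v h))
  simp only [frob_symCurlM_hessM ψ hv2.contDiffAt]
  rw [setIntegral_eq_integral_of_forall_compl_eq_zero fun x hx => by simp [hhess_out _ _ x hx],
    integral_finsetSum _ fun i _ => ?_]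
  · exact Finset.sum_eq_zero fun i _ =>
      integral_pd_mul_sub_pd_mul_eq_zero hΩ (hψ_row i) hv3 hvsupp hvsub i
  · exact (integrable_pd_mul_pd_pd hΩ (hψ_row i) hv2 hvsupp hvsub 1 i 0).sub
      (integrable_pd_mul_pd_pd hΩ (hψ_row i) hv2 hvsupp hvsub 0 i 1)
end
end

section
/- Let Ω ⊆ ℝ² be a nonempty open connected set and let ψ : Ω → ℝ² be continuously differentiable on Ω. Then symCurl ψ(x) = 0 for all x ∈ Ω if and only if there exist a ∈ ℝ and b ∈ ℝ² such that ψ(x) = a·x + b for all x ∈ Ω (i.e. ψ is the restriction to Ω of an element of the lowest-order Raviart–Thomas space RT₀ = { x ↦ a x + b : a ∈ ℝ, b ∈ ℝ² }). -/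
noncomputable section

open MeasureTheory Matrix

/-!
`symCurl ψ = 0` says exactly that `Dψ(x) = c(x) • id` for a scalar `c(x)`: `∂₂ψ₁ = ∂₁ψ₂ = 0` and
`∂₁ψ₁ = ∂₂ψ₂`. On a ball, `ψ₁` is therefore invariant under translations along `e₂` and `ψ₂`
under translations along `e₁`, and so are their derivatives; going from `x` to the centre `p`
through the corner `(x₁, p₂)` gives `c(x) = ∂₁ψ₁(x₁, p₂) = ∂₂ψ₂(x₁, p₂) = c(p)`. Hence `c` is
locally constant, thus constant on the connected set `Ω`, and `ψ - c • id` has zero derivative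
on `Ω`.
-/

open Topology Metric

section

variable {E F : Type*} [NormedAddCommGroup E] [NormedSpace ℝ E] [NormedAddCommGroup F]
  [NormedSpace ℝ F] {s : Set E} {g : E → F} {v x : E} {t : ℝ}

theorem Convex.apply_add_smul_eq_of_fderiv_apply_eq_zero (hs : Convex ℝ s) (hso : IsOpen s)
    (hg : DifferentiableOn ℝ g s) (hv : ∀ y ∈ s, fderiv ℝ g y v = 0) (hx : x ∈ s)
    (hxt : x + t • v ∈ s) : g (x + t • v) = g x := by
  set I : Set ℝ := (fun τ : ℝ => x + τ • v) ⁻¹' s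
  have hIo : IsOpen I := hso.preimage (by fun_prop)
  have hIc : Convex ℝ I := by
    intro a ha b hb μ ν hμ hν hμν
    have := hs ha hb hμ hν hμν
    simp only [I, Set.mem_preimage] at this ⊢
    convert this using 1
    obtain rfl : ν = 1 - μ := by linarith
    module
  have hderiv : ∀ τ ∈ I, HasDerivAt (fun τ : ℝ => g (x + τ • v)) 0 τ := by
    intro τ hτ
    have hline : HasDerivAt (fun τ : ℝ => x + τ • v) v τ := by
      simpa using ((hasDerivAt_id τ).smul_const v).const_add x
    have := ((hg _ hτ).differentiableAt (hso.mem_nhds hτ)).hasFDerivAt.comp_hasDerivAt τ hline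
    rwa [hv _ hτ] at this
  have := hIo.is_const_of_deriv_eq_zero hIc.isPreconnected
    (fun τ hτ => (hderiv τ hτ).differentiableAt.differentiableWithinAt)
    (fun τ hτ => (hderiv τ hτ).deriv) (show t ∈ I from hxt)
    (show (0 : ℝ) ∈ I by simpa [I] using hx)
  simpa using this

theorem Convex.fderiv_add_smul_eq_of_fderiv_apply_eq_zero (hs : Convex ℝ s) (hso : IsOpen s)
    (hg : DifferentiableOn ℝ g s) (hv : ∀ y ∈ s, fderiv ℝ g y v = 0) (hx : x ∈ s)
    (hxt : x + t • v ∈ s) : fderiv ℝ g (x + t • v) = fderiv ℝ g x := by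
  have hshift : (fun y => g (y + t • v)) =ᶠ[𝓝 x] g := by
    filter_upwards [hso.mem_nhds hx,
      (hso.preimage (continuous_add_const (t • v))).mem_nhds hxt] with y hy hyt
    exact hs.apply_add_smul_eq_of_fderiv_apply_eq_zero hso hg hv hy hyt
  rw [← fderiv_comp_add_right, hshift.fderiv_eq]

end

local notation "toPi" => (EuclideanSpace.equiv (Fin 2) ℝ : E2 →L[ℝ] Fin 2 → ℝ)

theorem pd_apply_eq_fderiv_apply {ψ : E2 → Fin 2 → ℝ} {x : E2} (hψ : DifferentiableAt ℝ ψ x)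
    (i j : Fin 2) : pd j (fun y => ψ y i) x = fderiv ℝ ψ x (EuclideanSpace.single j 1) i := by
  simp [pd, fderiv_apply hψ i]

theorem symCurlM_eq_zero_iff (ψ : E2 → Fin 2 → ℝ) (x : E2) :
    symCurlM ψ x = 0 ↔ pd 1 (fun y => ψ y 0) x = 0 ∧ pd 0 (fun y => ψ y 1) x = 0 ∧
      pd 0 (fun y => ψ y 0) x = pd 1 (fun y => ψ y 1) x := by
  simp only [symCurlM, CurlM, ← Matrix.ext_iff, Fin.forall_fin_two, Matrix.smul_apply,
    Matrix.add_apply, transpose_apply, of_apply, cons_val_zero, cons_val_one, cons_val_fin_one,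
    Matrix.zero_apply, smul_eq_mul, mul_eq_zero, inv_eq_zero, two_ne_zero, add_self_eq_zero,
    false_or, neg_eq_zero]
  constructor
  · rintro ⟨⟨h01, hd⟩, -, h10⟩
    exact ⟨h01, h10, by linarith⟩
  · rintro ⟨h01, h10, hd⟩
    exact ⟨⟨h01, by linarith⟩, by linarith, h10⟩

theorem exists_eq_smul_toPi_iff (D : E2 →L[ℝ] Fin 2 → ℝ) :
    (∃ a : ℝ, D = a • toPi) ↔ D (EuclideanSpace.single 1 1) 0 = 0 ∧
      D (EuclideanSpace.single 0 1) 1 = 0 ∧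
      D (EuclideanSpace.single 0 1) 0 = D (EuclideanSpace.single 1 1) 1 := by
  constructor
  · rintro ⟨a, rfl⟩
    simp
  · rintro ⟨h01, h10, hd⟩
    refine ⟨D (EuclideanSpace.single 0 1) 0, ContinuousLinearMap.coe_injective ?_⟩
    refine (EuclideanSpace.basisFun (Fin 2) ℝ).toBasis.ext fun j => funext fun i => ?_
    fin_cases i <;> fin_cases j <;> simp [h01, h10, hd]

theorem symCurlM_eq_zero_iff_exists_fderiv_eq_smul {ψ : E2 → Fin 2 → ℝ} {x : E2}
    (hψ : DifferentiableAt ℝ ψ x) : symCurlM ψ x = 0 ↔ ∃ a : ℝ, fderiv ℝ ψ x = a • toPi := by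
  simp only [symCurlM_eq_zero_iff, exists_eq_smul_toPi_iff, pd_apply_eq_fderiv_apply hψ]

theorem eq_of_fderiv_eq_smul_toPi_of_mem_ball {ψ : E2 → Fin 2 → ℝ} {c : E2 → ℝ} {p x : E2}
    {r : ℝ} (hψ : DifferentiableOn ℝ ψ (ball p r))
    (hc : ∀ y ∈ ball p r, fderiv ℝ ψ y = c y • toPi) (hx : x ∈ ball p r) : c x = c p := by
  have hψi : ∀ i, DifferentiableOn ℝ (fun y => ψ y i) (ball p r) := differentiableOn_pi.1 hψ
  have hpartial : ∀ y ∈ ball p r, ∀ i j : Fin 2,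
      fderiv ℝ (fun y => ψ y i) y (EuclideanSpace.single j 1) =
        c y * (EuclideanSpace.single j 1 : E2) i := by
    intro y hy i j
    rw [← pd, pd_apply_eq_fderiv_apply (hψ.differentiableAt (isOpen_ball.mem_nhds hy)), hc y hy]
    simp
  have hoffdiag : ∀ i j : Fin 2, i ≠ j → ∀ y ∈ ball p r,
      fderiv ℝ (fun y => ψ y i) y (EuclideanSpace.single j 1) = 0 := by
    intro i j hij y hy
    simp [hpartial y hy, hij]
  have hp : p ∈ ball p r := mem_ball_self (pos_of_mem_ball hx)
  set z := x + (p 1 - x 1) • EuclideanSpace.single 1 (1 : ℝ)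
  have hz : z ∈ ball p r := by
    rw [mem_ball, EuclideanSpace.dist_eq] at hx ⊢
    refine lt_of_le_of_lt (Real.sqrt_le_sqrt ?_) hx
    simp [z, Fin.sum_univ_two]
  have hzp : z + (p 0 - z 0) • EuclideanSpace.single 0 (1 : ℝ) = p := by
    ext i
    fin_cases i <;> simp [z]
  calc c x = fderiv ℝ (fun y => ψ y 0) x (EuclideanSpace.single 0 1) := by simp [hpartial x hx]
    _ = fderiv ℝ (fun y => ψ y 0) z (EuclideanSpace.single 0 1) := by
      rw [(convex_ball p r).fderiv_add_smul_eq_of_fderiv_apply_eq_zero isOpen_ball (hψi 0)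
        (hoffdiag 0 1 (by decide)) hx hz]
    _ = fderiv ℝ (fun y => ψ y 1) z (EuclideanSpace.single 1 1) := by
      simp [hpartial z hz]
    _ = fderiv ℝ (fun y => ψ y 1) p (EuclideanSpace.single 1 1) := by
      have := (convex_ball p r).fderiv_add_smul_eq_of_fderiv_apply_eq_zero isOpen_ball (hψi 1)
        (hoffdiag 1 0 (by decide)) hz (by rwa [hzp])
      rw [← this, hzp]
    _ = c p := by simp [hpartial p hp]

theorem IsOpen.exists_eq_const_of_fderiv_eq_smul_toPi {Ω : Set E2} (hΩ : IsOpen Ω)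
    (hconn : IsPreconnected Ω) {ψ : E2 → Fin 2 → ℝ} {c : E2 → ℝ} (hψ : DifferentiableOn ℝ ψ Ω)
    (hc : ∀ y ∈ Ω, fderiv ℝ ψ y = c y • toPi) : ∃ a, ∀ x ∈ Ω, c x = a := by
  have hloc : ∀ p ∈ Ω, c =ᶠ[𝓝 p] fun _ => c p := by
    intro p hp
    obtain ⟨r, hr, hrΩ⟩ := Metric.isOpen_iff.1 hΩ p hp
    filter_upwards [ball_mem_nhds p hr] with x hx
    exact eq_of_fderiv_eq_smul_toPi_of_mem_ball (hψ.mono hrΩ) (fun y hy => hc y (hrΩ hy)) hx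
  have hderiv : ∀ p ∈ Ω, HasFDerivAt c (0 : E2 →L[ℝ] ℝ) p := fun p hp =>
    (hasFDerivAt_const (c p) p).congr_of_eventuallyEq (hloc p hp)
  exact hΩ.exists_is_const_of_fderiv_eq_zero hconn
    (fun p hp => (hderiv p hp).differentiableAt.differentiableWithinAt)
    fun p hp => (hderiv p hp).fderiv

/-- For a `C¹` vector field `ψ` on a nonempty open connected set `Ω ⊆ ℝ²`,
`symCurl ψ = 0` on `Ω` iff `ψ` is the restriction to `Ω` of an element of
`RT₀ = { x ↦ a x + b : a ∈ ℝ, b ∈ ℝ² }`. -/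
theorem symCurl_eq_zero_iff_RT0 (Ω : Set E2) (hΩ : IsOpen Ω) (hconn : IsConnected Ω)
    (ψ : E2 → Fin 2 → ℝ) (hψ : ContDiffOn ℝ 1 ψ Ω) :
    (∀ x ∈ Ω, symCurlM ψ x = 0) ↔
      ∃ (a : ℝ) (b : Fin 2 → ℝ), ∀ x ∈ Ω, ψ x = fun i => a * x i + b i := by
  have hψ' : DifferentiableOn ℝ ψ Ω := hψ.differentiableOn one_ne_zero
  have hψx : ∀ x ∈ Ω, DifferentiableAt ℝ ψ x := fun x hx => hψ'.differentiableAt (hΩ.mem_nhds hx)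
  have hRT0 : ∀ (a : ℝ) (b : Fin 2 → ℝ) (x : E2), (a • toPi) x + b = fun i => a * x i + b i :=
    fun a b x => by ext; simp
  constructor
  · intro h
    choose! c hc using fun x hx =>
      (symCurlM_eq_zero_iff_exists_fderiv_eq_smul (hψx x hx)).1 (h x hx)
    obtain ⟨a, ha⟩ := hΩ.exists_eq_const_of_fderiv_eq_smul_toPi hconn.isPreconnected hψ' hc
    obtain ⟨b, hb⟩ := hΩ.exists_eq_add_of_fderiv_eq hconn.isPreconnected hψ'
      (a • toPi).differentiableOn fun x hx => by
        rw [hc x hx, ha x hx, ContinuousLinearMap.fderiv]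
    exact ⟨a, b, fun x hx => (hb hx).trans (hRT0 a b x)⟩
  · rintro ⟨a, b, hab⟩ x hx
    have hloc : ψ =ᶠ[𝓝 x] fun y => (a • toPi) y + b := by
      filter_upwards [hΩ.mem_nhds hx] with y hy
      rw [hab y hy, hRT0]
    refine (symCurlM_eq_zero_iff_exists_fderiv_eq_smul (hψx x hx)).2 ⟨a, ?_⟩
    rw [hloc.fderiv_eq, fderiv_add_const, ContinuousLinearMap.fderiv]
end
end
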